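/- arXiv:1411.7220 — 7 statements merged into one kernel-verified Lean document; each statement's English description precedes it below -/
import Mathlib

section
/- For M in E with M_tot < 1, each partial derivative of F_ij with respect to M_{i'j'} is bounded in absolute value by π_ij. Explicitly, ∂F_ij/∂M_{i'j'} = π_ij [ ((x_i − M_{i,·})/(1 − M_tot)) ((y_j − M_{·,j})/(1 − M_tot)) − ((x_i − M_{i,·})/(1 − M_tot)) δ_{jj'} − ((y_j − M_{·,j})/(1 − M_tot)) δ_{ii'} ], and |∂F_ij/∂M_{i'j'}| ≤ π_ij. -/
/-!
Perturbing `M` in the direction `E_{i'j'}` moves the `i`-th row sum by `δ_{ii'} t`, the `j`-th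
column sum by `δ_{jj'} t` and the total mass by `t`, so `t ↦ F_ij(M + t E_{i'j'})` is a quadratic
over a linear function and the quotient rule gives the formula. The normalised slacks
`a = (x_i - M_{i,·})/(1 - M_tot)` and `b = (y_j - M_{·,j})/(1 - M_tot)` lie in `[0, 1]`, since the
slack of one row (column) is at most the total slack, and `|ab - aδ - bδ'| ≤ 1` on `[0, 1]²`.
-/

open Finset

namespace Matrix

variable {m n α : Type*} [DecidableEq m] [DecidableEq n] [Semiring α]

theorem sum_add_smul_single_row [Fintype n] (M : Matrix m n α) (i' : m) (j' : n) (t : α)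
    (i : m) :
    ∑ j, (M + t • single i' j' (1 : α)) i j = ∑ j, M i j + t * if i = i' then 1 else 0 := by
  simp [sum_add_distrib, single_apply, ite_and, eq_comm]

theorem sum_add_smul_single_col [Fintype m] (M : Matrix m n α) (i' : m) (j' : n) (t : α)
    (j : n) :
    ∑ i, (M + t • single i' j' (1 : α)) i j = ∑ i, M i j + t * if j = j' then 1 else 0 := by
  simp [sum_add_distrib, single_apply, ite_and, eq_comm]

theorem sum_sum_add_smul_single [Fintype m] [Fintype n] (M : Matrix m n α) (i' : m) (j' : n)
    (t : α) : ∑ i, ∑ j, (M + t • single i' j' (1 : α)) i j = ∑ i, ∑ j, M i j + t := by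
  simp only [sum_add_smul_single_row, sum_add_distrib, mul_ite, mul_one, mul_zero, sum_ite_eq',
    mem_univ, if_true]

end Matrix

theorem sub_le_sum_sub_sum {ι β : Type*} [Fintype ι] [AddCommGroup β] [PartialOrder β]
    [IsOrderedAddMonoid β] {f g : ι → β} (h : ∀ i, f i ≤ g i) (i : ι) :
    g i - f i ≤ ∑ i, g i - ∑ i, f i := by
  rw [← sum_sub_distrib]
  exact single_le_sum (f := fun i => g i - f i) (fun i _ => sub_nonneg.2 (h i)) (mem_univ i)

theorem hasDerivAt_mul_sub_mul_sub_div_sub (p u v w α β : ℝ) (hw : w ≠ 0) :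
    HasDerivAt (fun t => p * (u - t * α) * (v - t * β) / (w - t))
      (p * (u / w * (v / w) - u / w * β - v / w * α)) 0 := by
  have hu : HasDerivAt (fun t => u - t * α) (-α) 0 := by
    simpa using ((hasDerivAt_id (0 : ℝ)).mul_const α).const_sub u
  have hv : HasDerivAt (fun t => v - t * β) (-β) 0 := by
    simpa using ((hasDerivAt_id (0 : ℝ)).mul_const β).const_sub v
  have hd : HasDerivAt (fun t => w - t) (-1) 0 := by
    simpa using (hasDerivAt_id (0 : ℝ)).const_sub w
  refine (((hu.const_mul p).fun_mul hv).fun_div hd (by simpa using hw)).congr_deriv ?_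
  field_simp
  ring

theorem abs_mul_sub_mul_ite_sub_mul_ite_le_one {a b : ℝ} (ha₀ : 0 ≤ a) (ha₁ : a ≤ 1)
    (hb₀ : 0 ≤ b) (hb₁ : b ≤ 1) (p q : Prop) [Decidable p] [Decidable q] :
    |a * b - a * (if p then 1 else 0) - b * (if q then 1 else 0)| ≤ 1 := by
  rw [abs_le]
  split_ifs <;> constructor <;> nlinarith

theorem rate_function_deriv_bound_general (k : ℕ)
    (x y : Fin k → ℝ) (π : Fin k → Fin k → ℝ)
    (hxsum : ∑ i, x i = 1) (hysum : ∑ j, y j = 1)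
    (hπ : ∀ i j, 0 < π i j)
    (M : Matrix (Fin k) (Fin k) ℝ)
    (hrow : ∀ i, ∑ j, M i j ≤ x i)
    (hcol : ∀ j, ∑ i, M i j ≤ y j)
    (htot : ∑ i, ∑ j, M i j < 1)
    (i j i' j' : Fin k) :
    (HasDerivAt
      (fun t : ℝ =>
        π i j * (x i - ∑ j'', (M + t • Matrix.single i' j' (1:ℝ)) i j'')
          * (y j - ∑ i'', (M + t • Matrix.single i' j' (1:ℝ)) i'' j)
          / (1 - ∑ i'', ∑ j'', (M + t • Matrix.single i' j' (1:ℝ)) i'' j''))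
      (π i j *
        (((x i - ∑ j'', M i j'') / (1 - ∑ i'', ∑ j'', M i'' j''))
          * ((y j - ∑ i'', M i'' j) / (1 - ∑ i'', ∑ j'', M i'' j''))
        - ((x i - ∑ j'', M i j'') / (1 - ∑ i'', ∑ j'', M i'' j''))
            * (if j = j' then 1 else 0)
        - ((y j - ∑ i'', M i'' j) / (1 - ∑ i'', ∑ j'', M i'' j''))
            * (if i = i' then 1 else 0)))
      0)
    ∧
    |π i j *
        (((x i - ∑ j'', M i j'') / (1 - ∑ i'', ∑ j'', M i'' j''))
          * ((y j - ∑ i'', M i'' j) / (1 - ∑ i'', ∑ j'', M i'' j''))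
        - ((x i - ∑ j'', M i j'') / (1 - ∑ i'', ∑ j'', M i'' j''))
            * (if j = j' then 1 else 0)
        - ((y j - ∑ i'', M i'' j) / (1 - ∑ i'', ∑ j'', M i'' j''))
            * (if i = i' then 1 else 0))|
      ≤ π i j := by
  have hslack : 0 < 1 - ∑ i'', ∑ j'', M i'' j'' := sub_pos.2 htot
  have hrow_slack : x i - ∑ j'', M i j'' ≤ 1 - ∑ i'', ∑ j'', M i'' j'' := by
    simpa [hxsum] using sub_le_sum_sub_sum hrow i
  have hcol_slack : y j - ∑ i'', M i'' j ≤ 1 - ∑ i'', ∑ j'', M i'' j'' := by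
    simpa [hysum, sum_comm (f := fun i'' j'' => M i'' j'')] using sub_le_sum_sub_sum hcol j
  refine ⟨?_, ?_⟩
  · -- the total first, before the row lemma fires inside it
    simp only [Matrix.sum_sum_add_smul_single]
    simp only [Matrix.sum_add_smul_single_row, Matrix.sum_add_smul_single_col]
    exact (hasDerivAt_mul_sub_mul_sub_div_sub _ _ _ _ _ _ hslack.ne').congr_of_eventuallyEq
      (.of_forall fun t => by ring)
  · rw [abs_mul, abs_of_pos (hπ i j)]
    refine mul_le_of_le_one_right (hπ i j).le
      (abs_mul_sub_mul_ite_sub_mul_ite_le_one ?_ ?_ ?_ ?_ _ _)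
    · exact div_nonneg (sub_nonneg.2 (hrow i)) hslack.le
    · exact div_le_one_of_le₀ hrow_slack hslack.le
    · exact div_nonneg (sub_nonneg.2 (hcol j)) hslack.le
    · exact div_le_one_of_le₀ hcol_slack hslack.le

/-- The partial derivative of `F_ij` with respect to `M_{i'j'}` has the stated
formula and is bounded in absolute value by `π_ij`. -/
theorem rate_function_deriv_bound (k : ℕ) (hk : 1 ≤ k)
    (x y : Fin k → ℝ) (π : Fin k → Fin k → ℝ)
    (hx : ∀ i, 0 ≤ x i) (hy : ∀ j, 0 ≤ y j)
    (hxsum : ∑ i, x i = 1) (hysum : ∑ j, y j = 1)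
    (hπ : ∀ i j, 0 < π i j)
    (M : Matrix (Fin k) (Fin k) ℝ)
    (hM : ∀ i j, 0 ≤ M i j)
    (hrow : ∀ i, ∑ j, M i j ≤ x i)
    (hcol : ∀ j, ∑ i, M i j ≤ y j)
    (htot : ∑ i, ∑ j, M i j < 1)
    (i j i' j' : Fin k) :
    (HasDerivAt
      (fun t : ℝ =>
        π i j * (x i - ∑ j'', (M + t • Matrix.single i' j' (1:ℝ)) i j'')
          * (y j - ∑ i'', (M + t • Matrix.single i' j' (1:ℝ)) i'' j)
          / (1 - ∑ i'', ∑ j'', (M + t • Matrix.single i' j' (1:ℝ)) i'' j''))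
      (π i j *
        (((x i - ∑ j'', M i j'') / (1 - ∑ i'', ∑ j'', M i'' j''))
          * ((y j - ∑ i'', M i'' j) / (1 - ∑ i'', ∑ j'', M i'' j''))
        - ((x i - ∑ j'', M i j'') / (1 - ∑ i'', ∑ j'', M i'' j''))
            * (if j = j' then 1 else 0)
        - ((y j - ∑ i'', M i'' j) / (1 - ∑ i'', ∑ j'', M i'' j''))
            * (if i = i' then 1 else 0)))
      0)
    ∧
    |π i j *
        (((x i - ∑ j'', M i j'') / (1 - ∑ i'', ∑ j'', M i'' j''))
          * ((y j - ∑ i'', M i'' j) / (1 - ∑ i'', ∑ j'', M i'' j''))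
        - ((x i - ∑ j'', M i j'') / (1 - ∑ i'', ∑ j'', M i'' j''))
            * (if j = j' then 1 else 0)
        - ((y j - ∑ i'', M i'' j) / (1 - ∑ i'', ∑ j'', M i'' j''))
            * (if i = i' then 1 else 0))|
      ≤ π i j :=
  rate_function_deriv_bound_general k x y π hxsum hysum hπ M hrow hcol htot i j i' j'
end

section
/- Let Π satisfy the fine balance condition π_ij = ᾱ_i + β̄_j. Define A_i(t) = x_i e^{−ᾱ_i t} / Σ_{i'} x_{i'} e^{−ᾱ_{i'} t} and B_j(t) = y_j e^{−β̄_j t} / Σ_{j'} y_{j'} e^{−β̄_{j'} t}. Then A and B solve the replicator equations: A_i'(t) = −A_i(t)[ (ΠB(t))_i − A(t)^T Π B(t) ] and B_j'(t) = −B_j(t)[ (Π^T A(t))_j − B(t)^T Π^T A(t) ], with initial conditions A_i(0) = x_i, B_j(0) = y_j. -/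
/-!
An exponential tilt `w i * exp (-c i * t) / Z(t)` of a distribution `w` solves the
replicator equation `A_i' = -A_i (c_i - ∑ c_{i'} A_{i'})` with constant payoffs `c`.
Under fine balance the row payoff `(ΠB)_i = ᾱ_i + ∑ β̄_j B_j` differs from `ᾱ_i` by a
constant, which cancels against the same constant in the mean
payoff `AᵀΠB = ∑ ᾱ_i A_i + ∑ β̄_j B_j`; symmetrically for `B`.
-/

open Finset

section ExpTilt

variable {ι : Type*} [Fintype ι] (w c : ι → ℝ)

noncomputable def expTilt (i : ι) (t : ℝ) : ℝ :=
  w i * Real.exp (-c i * t) / ∑ i', w i' * Real.exp (-c i' * t)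

variable {w}

lemma expTilt_zero (hw : ∑ i, w i = 1) (i : ι) : expTilt w c i 0 = w i := by
  simp [expTilt, hw]

lemma sum_mul_exp_pos (hw : ∀ i, 0 < w i) [Nonempty ι] (t : ℝ) :
    0 < ∑ i, w i * Real.exp (-c i * t) :=
  sum_pos (fun i _ => mul_pos (hw i) (Real.exp_pos _)) univ_nonempty

lemma sum_expTilt (hw : ∀ i, 0 < w i) [Nonempty ι] (t : ℝ) : ∑ i, expTilt w c i t = 1 := by
  simp only [expTilt, ← sum_div]
  exact div_self (sum_mul_exp_pos c hw t).ne'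

lemma hasDerivAt_mul_exp (a b t : ℝ) :
    HasDerivAt (fun s => a * Real.exp (-b * s)) (-(b * (a * Real.exp (-b * t)))) t :=
  (((hasDerivAt_const_mul (-b)).exp).const_mul a).congr_deriv (by ring)

lemma hasDerivAt_expTilt (hw : ∀ i, 0 < w i) (i : ι) (t : ℝ) :
    HasDerivAt (expTilt w c i)
      (-expTilt w c i t * (c i - ∑ i', c i' * expTilt w c i' t)) t := by
  have : Nonempty ι := ⟨i⟩
  have hZ := (sum_mul_exp_pos c hw t).ne'
  refine ((hasDerivAt_mul_exp (w i) (c i) t).fun_div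
    (HasDerivAt.fun_sum fun i' _ => hasDerivAt_mul_exp (w i') (c i') t) hZ).congr_deriv ?_
  simp only [expTilt, mul_div_assoc', ← sum_div, sum_neg_distrib]
  generalize ∑ i', w i' * Real.exp (-c i' * t) = Z at hZ ⊢
  field_simp
  ring

end ExpTilt

section FineBalance

variable {ι κ : Type*} (α : ι → ℝ) (β : κ → ℝ) {a : ι → ℝ} {b : κ → ℝ}

lemma sum_add_mul_left [Fintype κ] (hb : ∑ j, b j = 1) (i : ι) :
    ∑ j, (α i + β j) * b j = α i + ∑ j, β j * b j := by
  simp only [add_mul, sum_add_distrib, ← mul_sum, hb, mul_one]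

lemma sum_add_mul_right [Fintype ι] (ha : ∑ i, a i = 1) (j : κ) :
    ∑ i, (α i + β j) * a i = ∑ i, α i * a i + β j := by
  simp only [add_mul, sum_add_distrib, ← mul_sum, ha, mul_one]

lemma sum_sum_add_mul_mul [Fintype ι] [Fintype κ] (ha : ∑ i, a i = 1) (hb : ∑ j, b j = 1) :
    ∑ i, ∑ j, (α i + β j) * a i * b j = ∑ i, α i * a i + ∑ j, β j * b j := by
  have h : ∀ i j, (α i + β j) * a i * b j = α i * a i * b j + a i * (β j * b j) :=
    fun i j => by ring
  simp only [h, sum_add_distrib, ← mul_sum, ← sum_mul, hb, ha, mul_one, one_mul]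

end FineBalance

theorem fine_balance_replicator_general (k : ℕ)
    (α β : Fin k → ℝ)
    (x y : Fin k → ℝ) (hx : ∀ i, 0 < x i) (hy : ∀ j, 0 < y j)
    (hxsum : ∑ i, x i = 1) (hysum : ∑ j, y j = 1)
    (π : Fin k → Fin k → ℝ) (hπ : ∀ i j, π i j = α i + β j)
    (A B : Fin k → ℝ → ℝ)
    (hA : ∀ i t, A i t = x i * Real.exp (-α i * t) / ∑ i', x i' * Real.exp (-α i' * t))
    (hB : ∀ j t, B j t = y j * Real.exp (-β j * t) / ∑ j', y j' * Real.exp (-β j' * t)) :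
    (∀ i, A i 0 = x i) ∧ (∀ j, B j 0 = y j) ∧
    (∀ i t, HasDerivAt (A i)
      (-(A i t) * ((∑ j, π i j * B j t) - ∑ i', ∑ j, π i' j * A i' t * B j t)) t) ∧
    (∀ j t, HasDerivAt (B j)
      (-(B j t) * ((∑ i, π i j * A i t) - ∑ i, ∑ j', π i j' * A i t * B j' t)) t) := by
  obtain rfl : A = expTilt x α := funext fun i => funext (hA i)
  obtain rfl : B = expTilt y β := funext fun j => funext (hB j)
  refine ⟨expTilt_zero α hxsum, expTilt_zero β hysum, fun i t => ?_, fun j t => ?_⟩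
  · have : Nonempty (Fin k) := ⟨i⟩
    simp only [hπ, sum_add_mul_left α β (sum_expTilt β hy t),
      sum_sum_add_mul_mul α β (sum_expTilt α hx t) (sum_expTilt β hy t), add_sub_add_right_eq_sub]
    exact hasDerivAt_expTilt α hx i t
  · have : Nonempty (Fin k) := ⟨j⟩
    simp only [hπ, sum_add_mul_right α β (sum_expTilt α hx t),
      sum_sum_add_mul_mul α β (sum_expTilt α hx t) (sum_expTilt β hy t), add_sub_add_left_eq_sub]
    exact hasDerivAt_expTilt β hy j t

/-- Under fine balance, the explicit exponential formulas solve the replicator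
equations with initial conditions `A_i(0) = x_i`, `B_j(0) = y_j`. -/
theorem fine_balance_replicator (k : ℕ) (hk : 1 ≤ k)
    (α β : Fin k → ℝ) (hα : ∀ i, 0 ≤ α i) (hβ : ∀ j, 0 ≤ β j)
    (x y : Fin k → ℝ) (hx : ∀ i, 0 < x i) (hy : ∀ j, 0 < y j)
    (hxsum : ∑ i, x i = 1) (hysum : ∑ j, y j = 1)
    (π : Fin k → Fin k → ℝ) (hπ : ∀ i j, π i j = α i + β j)
    (A B : Fin k → ℝ → ℝ)
    (hA : ∀ i t, A i t = x i * Real.exp (-α i * t) / ∑ i', x i' * Real.exp (-α i' * t))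
    (hB : ∀ j t, B j t = y j * Real.exp (-β j * t) / ∑ j', y j' * Real.exp (-β j' * t)) :
    (∀ i, A i 0 = x i) ∧ (∀ j, B j 0 = y j) ∧
    (∀ i t, HasDerivAt (A i)
      (-(A i t) * ((∑ j, π i j * B j t) - ∑ i', ∑ j, π i' j * A i' t * B j t)) t) ∧
    (∀ j t, HasDerivAt (B j)
      (-(B j t) * ((∑ i, π i j * A i t) - ∑ i, ∑ j', π i j' * A i t * B j' t)) t) :=
  fine_balance_replicator_general k α β x y hx hy hxsum hysum π hπ A B hA hB
end

section
/- Under the fine balance condition, the functions Q_ij(t) = x_i y_j (1 − e^{−π_ij t}) satisfy the fluid limit ODE Q_ij'(t) = π_ij (x_i − Q_{i,·}(t))(y_j − Q_{·,j}(t))/(1 − Q_tot(t)) with Q_ij(0) = 0, where Q_{i,·}(t) = Σ_j Q_ij(t), Q_{·,j}(t) = Σ_i Q_ij(t), Q_tot(t) = Σ_{i,j} Q_ij(t). In particular, Q_ij(t) → x_i y_j as t → ∞ (panmixia). -/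
open Finset Filter

/-!
Since `π_ij = ᾱ_i + β̄_j`, the factor `e^{-π_ij t}` splits as `e^{-ᾱ_i t} e^{-β̄_j t}`. As the
marginals of `x` and `y` sum to one, the row deficit `x_i - Q_{i,·}(t)` becomes
`x_i e^{-ᾱ_i t} B̄(t)`, the column deficit `y_j - Q_{·,j}(t)` becomes `y_j e^{-β̄_j t} Ā(t)`, and
`1 - Q_tot(t) = Ā(t) B̄(t)`. The right-hand side of the ODE therefore collapses to
`π_ij x_i y_j e^{-π_ij t}`, which is the derivative of `Q_ij`.
-/

namespace FineBalance

variable {ι κ : Type*}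

/-- `Ā(t)` and `B̄(t)` of the paper are `expMix x ᾱ t` and `expMix y β̄ t`. -/
noncomputable def expMix [Fintype ι] (w a : ι → ℝ) (t : ℝ) : ℝ :=
  ∑ i, w i * Real.exp (-a i * t)

lemma expMix_pos [Fintype ι] [Nonempty ι] {w : ι → ℝ} (hw : ∀ i, 0 < w i) (a : ι → ℝ) (t : ℝ) :
    0 < expMix w a t :=
  sum_pos (fun i _ => mul_pos (hw i) (Real.exp_pos _)) univ_nonempty

lemma mul_one_sub_exp_add (u v a b t : ℝ) :
    u * v * (1 - Real.exp (-(a + b) * t)) =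
      u * v - u * Real.exp (-a * t) * (v * Real.exp (-b * t)) := by
  rw [show -(a + b) * t = -a * t + -b * t by ring, Real.exp_add]
  ring

lemma sub_sum_row [Fintype κ] (x : ι → ℝ) {y : κ → ℝ} (a : ι → ℝ) (b : κ → ℝ) (t : ℝ)
    (hy : ∑ j, y j = 1) (i : ι) :
    x i - ∑ j, x i * y j * (1 - Real.exp (-(a i + b j) * t)) =
      x i * Real.exp (-a i * t) * expMix y b t := by
  simp only [mul_one_sub_exp_add, sum_sub_distrib, ← mul_sum, hy, mul_one, sub_sub_cancel,
    expMix]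

lemma sub_sum_col [Fintype ι] {x : ι → ℝ} (y : κ → ℝ) (a : ι → ℝ) (b : κ → ℝ) (t : ℝ)
    (hx : ∑ i, x i = 1) (j : κ) :
    y j - ∑ i, x i * y j * (1 - Real.exp (-(a i + b j) * t)) =
      y j * Real.exp (-b j * t) * expMix x a t := by
  simp only [mul_one_sub_exp_add, sum_sub_distrib, ← sum_mul, hx, one_mul, sub_sub_cancel,
    expMix]
  ring

lemma one_sub_sum_sum [Fintype ι] [Fintype κ] {x : ι → ℝ} {y : κ → ℝ} (a : ι → ℝ) (b : κ → ℝ)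
    (t : ℝ) (hx : ∑ i, x i = 1) (hy : ∑ j, y j = 1) :
    1 - ∑ i, ∑ j, x i * y j * (1 - Real.exp (-(a i + b j) * t)) = expMix x a t * expMix y b t := by
  simp only [mul_one_sub_exp_add, sum_sub_distrib, ← mul_sum, hy, mul_one, hx, sub_sub_cancel,
    expMix, sum_mul_sum]

end FineBalance

open FineBalance

lemma hasDerivAt_mul_one_sub_exp (m c t : ℝ) :
    HasDerivAt (fun s => m * (1 - Real.exp (-c * s))) (c * m * Real.exp (-c * t)) t := by
  have := (((hasDerivAt_id t).const_mul (-c)).exp.const_sub 1).const_mul m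
  exact this.congr_deriv (by simp only [id]; ring)

lemma tendsto_mul_one_sub_exp (m : ℝ) {c : ℝ} (hc : 0 < c) :
    Tendsto (fun s => m * (1 - Real.exp (-c * s))) atTop (nhds m) := by
  have hexp : Tendsto (fun s => Real.exp (-c * s)) atTop (nhds 0) :=
    Real.tendsto_exp_comp_nhds_zero.mpr (tendsto_id.const_mul_atTop_of_neg (neg_lt_zero.mpr hc))
  simpa using (tendsto_const_nhds (x := (1 : ℝ))).sub hexp |>.const_mul m

theorem fine_balance_pair_type_general (k : ℕ)
    (α β : Fin k → ℝ)
    (x y : Fin k → ℝ) (hx : ∀ i, 0 < x i) (hy : ∀ j, 0 < y j)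
    (hxsum : ∑ i, x i = 1) (hysum : ∑ j, y j = 1)
    (π : Fin k → Fin k → ℝ) (hπ : ∀ i j, π i j = α i + β j)
    (hπpos : ∀ i j, 0 < π i j)
    (Q : Fin k → Fin k → ℝ → ℝ)
    (hQ : ∀ i j t, Q i j t = x i * y j * (1 - Real.exp (-π i j * t))) :
    (∀ i j, Q i j 0 = 0) ∧
    (∀ i j t, HasDerivAt (Q i j)
      (π i j * (x i - ∑ j', Q i j' t) * (y j - ∑ i', Q i' j t)
        / (1 - ∑ i', ∑ j', Q i' j' t)) t) ∧
    (∀ i j, Tendsto (Q i j) atTop (nhds (x i * y j))) := by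
  obtain rfl : Q = fun i j t => x i * y j * (1 - Real.exp (-π i j * t)) := funext₃ hQ
  refine ⟨fun i j => by simp, fun i j t => ?_, fun i j => tendsto_mul_one_sub_exp _ (hπpos i j)⟩
  obtain rfl : π = fun i j => α i + β j := funext₂ hπ
  have : Nonempty (Fin k) := univ_nonempty_iff.mp (nonempty_of_sum_ne_zero (hxsum ▸ one_ne_zero))
  have hA := (expMix_pos hx α t).ne'
  have hB := (expMix_pos hy β t).ne'
  simp only [sub_sum_row x α β t hysum, sub_sum_col y α β t hxsum,
    one_sub_sum_sum α β t hxsum hysum]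
  convert hasDerivAt_mul_one_sub_exp (x i * y j) (α i + β j) t using 1
  rw [show -(α i + β j) * t = -α i * t + -β j * t by ring, Real.exp_add]
  field_simp

/-- Under fine balance, `Q_ij(t) = x_i y_j (1 − e^{−π_ij t})` solves the fluid
limit ODE and converges to the panmictic pattern `x_i y_j`. -/
theorem fine_balance_pair_type (k : ℕ) (hk : 1 ≤ k)
    (α β : Fin k → ℝ) (hα : ∀ i, 0 ≤ α i) (hβ : ∀ j, 0 ≤ β j)
    (x y : Fin k → ℝ) (hx : ∀ i, 0 < x i) (hy : ∀ j, 0 < y j)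
    (hxsum : ∑ i, x i = 1) (hysum : ∑ j, y j = 1)
    (π : Fin k → Fin k → ℝ) (hπ : ∀ i j, π i j = α i + β j)
    (hπpos : ∀ i j, 0 < π i j)
    (Q : Fin k → Fin k → ℝ → ℝ)
    (hQ : ∀ i j t, Q i j t = x i * y j * (1 - Real.exp (-π i j * t))) :
    (∀ i j, Q i j 0 = 0) ∧
    (∀ i j t, HasDerivAt (Q i j)
      (π i j * (x i - ∑ j', Q i j' t) * (y j - ∑ i', Q i' j t)
        / (1 - ∑ i', ∑ j', Q i' j' t)) t) ∧
    (∀ i j, Tendsto (Q i j) atTop (nhds (x i * y j))) :=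
  fine_balance_pair_type_general k α β x y hx hy hxsum hysum π hπ hπpos Q hQ
end

section
/- Let A_i(t) = X_i(t)/Z(t) and B_j(t) = Y_j(t)/Z(t) where X, Y, Z arise from a solution of the fluid limit ODE with Z(t) > 0 (as in the Lotka–Volterra formulation). Then Z'(t) = −Z(t)·A(t)^T Π B(t), and A, B satisfy the replicator equations A_i'(t) = −A_i(t)[(ΠB(t))_i − A(t)^T Π B(t)], B_j'(t) = −B_j(t)[(Π^T A(t))_j − A(t)^T Π B(t)]. -/
open Finset

/-!
Dividing by `Z` turns the interaction terms into per-capita rates: `X_i' = -X_i (ΠB)_i` and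
`Y_j' = -Y_j (ΠᵀA)_j`. Summing the first over `i` shows that `Z` decays at the mean rate
`AᵀΠB`, and a quotient of two populations decays at the difference of their per-capita rates.
-/

section PerCapita

variable {𝕜 : Type*} [NontriviallyNormedField 𝕜]

theorem HasDerivAt.div_of_per_capita {f g : 𝕜 → 𝕜} {r s t : 𝕜}
    (hf : HasDerivAt f (-(f t) * r) t) (hg : HasDerivAt g (-(g t) * s) t) (hgt : g t ≠ 0) :
    HasDerivAt (fun x => f x / g x) (-(f t / g t) * (r - s)) t :=
  (hf.fun_div hg hgt).congr_deriv (by field_simp; ring)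

theorem HasDerivAt.sum_of_per_capita {ι : Type*} [Fintype ι] {X : ι → 𝕜 → 𝕜} {Z : 𝕜 → 𝕜}
    {r : ι → 𝕜} {t : 𝕜} (hX : ∀ i, HasDerivAt (X i) (-(X i t) * r i) t)
    (hZ : ∀ s, Z s = ∑ i, X i s) (hZt : Z t ≠ 0) :
    HasDerivAt Z (-(Z t) * ∑ i, X i t / Z t * r i) t := by
  have hsum : HasDerivAt Z (∑ i, -(X i t) * r i) t := by
    rw [funext hZ]
    exact HasDerivAt.fun_sum fun i _ => hX i
  refine hsum.congr_deriv ?_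
  rw [mul_sum]
  exact sum_congr rfl fun i _ => by field_simp

end PerCapita

theorem div_mul_sum_eq_mul_sum_div {ι K : Type*} [Fintype ι] [Field K] (a z : K) (c y : ι → K) :
    a / z * ∑ j, c j * y j = a * ∑ j, c j * (y j / z) := by
  simp only [mul_sum]
  exact sum_congr rfl fun j _ => by ring

theorem sum_mul_sum_eq_bilinear {ι κ R : Type*} [Fintype ι] [Fintype κ] [CommSemiring R]
    (π : ι → κ → R) (a : ι → R) (b : κ → R) :
    ∑ i, a i * ∑ j, π i j * b j = ∑ i, ∑ j, π i j * a i * b j := by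
  simp only [mul_sum]
  exact sum_congr rfl fun i _ => sum_congr rfl fun j _ => by ring

theorem lotka_volterra_to_replicator_general (k : ℕ)
    (π : Fin k → Fin k → ℝ)
    (X Y : Fin k → ℝ → ℝ) (Z : ℝ → ℝ) (A B : Fin k → ℝ → ℝ)
    (hZ : ∀ t, Z t = ∑ i, X i t)
    (hZpos : ∀ t, 0 < Z t)
    (hXode : ∀ i t, HasDerivAt (X i) (-(X i t / Z t) * ∑ j, π i j * Y j t) t)
    (hYode : ∀ j t, HasDerivAt (Y j) (-(Y j t / Z t) * ∑ i, π i j * X i t) t)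
    (hA : ∀ i t, A i t = X i t / Z t)
    (hB : ∀ j t, B j t = Y j t / Z t) :
    (∀ t, HasDerivAt Z (-(Z t) * ∑ i, ∑ j, π i j * A i t * B j t) t) ∧
    (∀ i t, HasDerivAt (A i)
      (-(A i t) * ((∑ j, π i j * B j t) - ∑ i', ∑ j, π i' j * A i' t * B j t)) t) ∧
    (∀ j t, HasDerivAt (B j)
      (-(B j t) * ((∑ i, π i j * A i t) - ∑ i, ∑ j', π i j' * A i t * B j' t)) t) := by
  have hX : ∀ i t, HasDerivAt (X i) (-(X i t) * ∑ j, π i j * B j t) t := fun i t => by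
    simpa only [neg_mul, hB, div_mul_sum_eq_mul_sum_div] using hXode i t
  have hY : ∀ j t, HasDerivAt (Y j) (-(Y j t) * ∑ i, π i j * A i t) t := fun j t => by
    simpa only [neg_mul, hA, div_mul_sum_eq_mul_sum_div] using hYode j t
  have hZ' : ∀ t, HasDerivAt Z (-(Z t) * ∑ i, ∑ j, π i j * A i t * B j t) t := fun t => by
    simpa only [← hA, sum_mul_sum_eq_bilinear] using
      HasDerivAt.sum_of_per_capita (fun i => hX i t) hZ (hZpos t).ne'
  refine ⟨hZ', fun i t => ?_, fun j t => ?_⟩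
  · have h := (hX i t).div_of_per_capita (hZ' t) (hZpos t).ne'
    rwa [← hA, ← funext (hA i)] at h
  · have h := (hY j t).div_of_per_capita (hZ' t) (hZpos t).ne'
    rwa [← hB, ← funext (hB j)] at h

/-- From the Lotka–Volterra formulation, the frequencies `A = X/Z`, `B = Y/Z`
solve the replicator equations, and `Z' = −Z·AᵀΠB`. -/
theorem lotka_volterra_to_replicator (k : ℕ) (hk : 1 ≤ k)
    (π : Fin k → Fin k → ℝ) (hπ : ∀ i j, 0 < π i j)
    (X Y : Fin k → ℝ → ℝ) (Z : ℝ → ℝ) (A B : Fin k → ℝ → ℝ)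
    (hZ : ∀ t, Z t = ∑ i, X i t)
    (hZY : ∀ t, Z t = ∑ j, Y j t)
    (hZpos : ∀ t, 0 < Z t)
    (hXode : ∀ i t, HasDerivAt (X i) (-(X i t / Z t) * ∑ j, π i j * Y j t) t)
    (hYode : ∀ j t, HasDerivAt (Y j) (-(Y j t / Z t) * ∑ i, π i j * X i t) t)
    (hA : ∀ i t, A i t = X i t / Z t)
    (hB : ∀ j t, B j t = Y j t / Z t) :
    (∀ t, HasDerivAt Z (-(Z t) * ∑ i, ∑ j, π i j * A i t * B j t) t) ∧
    (∀ i t, HasDerivAt (A i)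
      (-(A i t) * ((∑ j, π i j * B j t) - ∑ i', ∑ j, π i' j * A i' t * B j t)) t) ∧
    (∀ j t, HasDerivAt (B j)
      (-(B j t) * ((∑ i, π i j * A i t) - ∑ i, ∑ j', π i j' * A i t * B j' t)) t) :=
  lotka_volterra_to_replicator_general k π X Y Z A B hZ hZpos hXode hYode hA hB
end

section
/- Consider the scalar ODE A_1'(t) = (π_22 − π_12) A_1(t)(1 − A_1(t))^2 with A_1(0) = x_1 ∈ (0,1) and π_22 > π_12 > 0 (the case γ = 1). Then for all t ≥ 0, A_1(t) ∈ (0,1) and the implicit formula [(1−x_1)A_1(t)] / [x_1(1 − A_1(t))] · exp{1/(1−A_1(t)) − 1/(1−x_1)} = e^{(π_22 − π_12)t} holds; moreover A_1(t) → 1 as t → ∞. -/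
/-!
Along a solution with values in `(0,1)`, `potential A` grows with slope exactly `π₂₂ − π₁₂`,
because `potential' a = 1 / (a (1 - a)²)`. Since `potential` tends to `-∞` at `0⁺` and to `+∞`
at `1⁻`, a solution cannot reach the boundary of `(0,1)` in finite time: at the first exit time
the potential would have a finite limit. Exponentiating the resulting conservation law gives the
implicit formula, and `potential (A t) → ∞` forces `A t → 1`.
-/

open Real Filter Set Topology

namespace GammaOne

noncomputable def potential (a : ℝ) : ℝ := log a - log (1 - a) + (1 - a)⁻¹

theorem hasDerivAt_potential {a : ℝ} (ha : a ∈ Ioo 0 1) :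
    HasDerivAt potential (1 / (a * (1 - a) ^ 2)) a := by
  have ha0 : a ≠ 0 := ha.1.ne'
  have h1a : 1 - a ≠ 0 := (sub_pos.2 ha.2).ne'
  have hsub : HasDerivAt (fun x : ℝ => 1 - x) (-1) a := by
    simpa using (hasDerivAt_id a).const_sub 1
  refine (((hasDerivAt_log ha0).sub ((hasDerivAt_log h1a).comp a hsub)).add
    (hsub.inv h1a)).congr_deriv ?_
  field_simp
  ring

theorem potential_strictMonoOn : StrictMonoOn potential (Ioo 0 1) := by
  refine strictMonoOn_of_deriv_pos (convex_Ioo 0 1)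
    (fun a ha => (hasDerivAt_potential ha).continuousAt.continuousWithinAt) fun a ha => ?_
  rw [interior_Ioo] at ha
  rw [(hasDerivAt_potential ha).deriv]
  have := sub_pos.2 ha.2
  have := ha.1
  positivity

theorem tendsto_potential_nhdsGT_zero : Tendsto potential (𝓝[>] 0) atBot := by
  have hcont : Tendsto (fun a : ℝ => -log (1 - a) + (1 - a)⁻¹) (𝓝[>] 0)
      (𝓝 (-log (1 - 0) + (1 - 0)⁻¹)) :=
    ((continuousAt_const.sub continuousAt_id).log (by norm_num)).neg.add
      ((continuousAt_const.sub continuousAt_id).inv₀ (by norm_num)) |>.tendsto.mono_left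
      nhdsWithin_le_nhds
  refine (tendsto_log_nhdsGT_zero.atBot_add hcont).congr fun a => ?_
  unfold potential
  ring

theorem tendsto_potential_nhdsLT_one : Tendsto potential (𝓝[<] 1) atTop := by
  have hlog : Tendsto log (𝓝[<] 1) (𝓝 (log 1)) :=
    (continuousAt_log one_ne_zero).tendsto.mono_left nhdsWithin_le_nhds
  have hgap : Tendsto (fun a : ℝ => 1 - a) (𝓝[<] 1) (𝓝[>] 0) := by
    refine tendsto_nhdsWithin_iff.2
      ⟨?_, eventually_nhdsWithin_of_forall fun a ha => sub_pos.2 (show a < 1 from ha)⟩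
    simpa using ((continuous_sub_left (1 : ℝ)).tendsto 1).mono_left nhdsWithin_le_nhds
  have hsing : Tendsto (fun a : ℝ => -log (1 - a) + (1 - a)⁻¹) (𝓝[<] 1) atTop :=
    ((tendsto_neg_atBot_atTop.comp tendsto_log_nhdsGT_zero).atTop_add_atTop
      tendsto_inv_nhdsGT_zero).comp hgap
  refine (hlog.add_atTop hsing).congr fun a => ?_
  unfold potential
  ring

theorem potential_eq_of_hasDerivAt {A : ℝ → ℝ} {c a b : ℝ} (hab : a ≤ b)
    (hode : ∀ t ∈ Icc a b, HasDerivAt A (c * A t * (1 - A t) ^ 2) t)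
    (hA : ∀ t ∈ Icc a b, A t ∈ Ioo 0 1) :
    potential (A b) = potential (A a) + c * (b - a) := by
  have hderiv : ∀ t ∈ Icc a b, HasDerivAt (fun s => potential (A s) - c * s) 0 t := by
    intro t ht
    have hA0 : A t ≠ 0 := (hA t ht).1.ne'
    have hA1 : 1 - A t ≠ 0 := (sub_pos.2 (hA t ht).2).ne'
    refine (((hasDerivAt_potential (hA t ht)).comp t (hode t ht)).sub
      ((hasDerivAt_id t).const_mul c)).congr_deriv ?_
    field_simp
    ring
  have hconst := constant_of_has_deriv_right_zero
    (fun t ht => (hderiv t ht).continuousAt.continuousWithinAt)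
    (fun t ht => (hderiv t (Ico_subset_Icc_self ht)).hasDerivWithinAt) b (right_mem_Icc.2 hab)
  linarith

theorem mem_Ioo_of_tendsto_potential {α : Type*} {l : Filter α} [l.NeBot] {f : α → ℝ} {y L : ℝ}
    (hf : ∀ᶠ x in l, f x ∈ Ioo 0 1) (hfy : Tendsto f l (𝓝 y))
    (hG : Tendsto (fun x => potential (f x)) l (𝓝 L)) : y ∈ Ioo 0 1 := by
  have hy : y ∈ Icc 0 1 :=
    isClosed_Icc.mem_of_tendsto hfy (hf.mono fun _ hx => Ioo_subset_Icc_self hx)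
  rcases hy.1.eq_or_lt with rfl | hy0
  · exact absurd hG <| not_tendsto_nhds_of_tendsto_atBot (tendsto_potential_nhdsGT_zero.comp
      (tendsto_nhdsWithin_iff.2 ⟨hfy, hf.mono fun _ hx => hx.1⟩)) L
  rcases hy.2.eq_or_lt with rfl | hy1
  · exact absurd hG <| not_tendsto_nhds_of_tendsto_atTop (tendsto_potential_nhdsLT_one.comp
      (tendsto_nhdsWithin_iff.2 ⟨hfy, hf.mono fun _ hx => hx.2⟩)) L
  exact ⟨hy0, hy1⟩

theorem mem_Ioo_of_hasDerivAt {A : ℝ → ℝ} {c : ℝ}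
    (hode : ∀ t, 0 ≤ t → HasDerivAt A (c * A t * (1 - A t) ^ 2) t) (h0 : A 0 ∈ Ioo 0 1)
    {t : ℝ} (ht : 0 ≤ t) : A t ∈ Ioo 0 1 := by
  by_contra hexit
  set S := Ici 0 ∩ A ⁻¹' (Ioo 0 1)ᶜ
  have hS : IsClosed S := ContinuousOn.preimage_isClosed_of_isClosed
    (fun s hs => (hode s hs).continuousAt.continuousWithinAt) isClosed_Ici
    isOpen_Ioo.isClosed_compl
  have hbdd : BddBelow S := ⟨0, fun s hs => hs.1⟩
  obtain ⟨hτ0, hτ⟩ : sInf S ∈ S := hS.csInf_mem ⟨t, ht, hexit⟩ hbdd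
  set τ := sInf S
  have hbefore : ∀ s, 0 ≤ s → s < τ → A s ∈ Ioo 0 1 := fun s hs hsτ =>
    by_contra fun h => (csInf_le hbdd ⟨hs, h⟩).not_gt hsτ
  have hτpos : 0 < τ := hτ0.lt_of_ne fun h => hτ (h ▸ h0)
  have hnear : ∀ᶠ s in 𝓝[<] τ, 0 ≤ s ∧ s < τ := by
    filter_upwards [Ioo_mem_nhdsLT hτpos] with s hs using ⟨hs.1.le, hs.2⟩
  have hlaw : Tendsto (fun s => potential (A s)) (𝓝[<] τ) (𝓝 (potential (A 0) + c * τ)) := by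
    refine ((continuous_const.add (continuous_const.mul continuous_id)).tendsto τ
      |>.mono_left nhdsWithin_le_nhds).congr' (hnear.mono fun s hs => ?_)
    simpa using (potential_eq_of_hasDerivAt hs.1 (fun r hr => hode r hr.1)
      (fun r hr => hbefore r hr.1 (hr.2.trans_lt hs.2))).symm
  exact hτ (mem_Ioo_of_tendsto_potential (hnear.mono fun s hs => hbefore s hs.1 hs.2)
    ((hode τ hτ0).continuousAt.tendsto.mono_left nhdsWithin_le_nhds) hlaw)

theorem tendsto_nhds_one_of_tendsto_potential {α : Type*} {l : Filter α} {f : α → ℝ}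
    (hf : ∀ᶠ x in l, f x ∈ Ioo 0 1) (hG : Tendsto (fun x => potential (f x)) l atTop) :
    Tendsto f l (𝓝 1) := by
  refine tendsto_order.2 ⟨fun b hb => ?_, fun b hb => hf.mono fun x hx => hx.2.trans hb⟩
  have hb' : max b (1 / 2) ∈ Ioo 0 1 :=
    ⟨lt_max_of_lt_right (by norm_num), max_lt hb (by norm_num)⟩
  filter_upwards [hf, hG.eventually_gt_atTop (potential (max b (1 / 2)))] with x hx hGx
  exact (le_max_left _ _).trans_lt ((potential_strictMonoOn.lt_iff_lt hb' hx).1 hGx)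

theorem exp_eq_of_potential_eq {x a s : ℝ} (hx : x ∈ Ioo 0 1) (ha : a ∈ Ioo 0 1)
    (h : potential a = potential x + s) :
    (1 - x) * a / (x * (1 - a)) * exp (1 / (1 - a) - 1 / (1 - x)) = exp s := by
  have hs : s = log a - log (1 - a) - (log x - log (1 - x)) + (1 / (1 - a) - 1 / (1 - x)) := by
    unfold potential at h
    simp only [one_div]
    linarith
  have h1a := sub_pos.2 ha.2
  have h1x := sub_pos.2 hx.2
  simp only [hs, exp_add, exp_sub, exp_log ha.1, exp_log h1a, exp_log hx.1, exp_log h1x]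
  field_simp

end GammaOne

open GammaOne

theorem gamma_one_case_general (π₁₂ π₂₂ x₁ : ℝ)
    (hπ : π₁₂ < π₂₂) (hx₁ : x₁ ∈ Set.Ioo (0:ℝ) 1)
    (A₁ : ℝ → ℝ) (hA0 : A₁ 0 = x₁)
    (hode : ∀ t, 0 ≤ t →
      HasDerivAt A₁ ((π₂₂ - π₁₂) * A₁ t * (1 - A₁ t) ^ 2) t) :
    (∀ t, 0 ≤ t → A₁ t ∈ Set.Ioo (0:ℝ) 1 ∧
      (1 - x₁) * A₁ t / (x₁ * (1 - A₁ t))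
        * Real.exp (1 / (1 - A₁ t) - 1 / (1 - x₁))
        = Real.exp ((π₂₂ - π₁₂) * t)) ∧
    Tendsto A₁ atTop (nhds 1) := by
  have hmem : ∀ t, 0 ≤ t → A₁ t ∈ Ioo 0 1 := fun t => mem_Ioo_of_hasDerivAt hode (hA0 ▸ hx₁)
  have hlaw : ∀ t, 0 ≤ t → potential (A₁ t) = potential x₁ + (π₂₂ - π₁₂) * t := fun t ht => by
    simpa [hA0] using potential_eq_of_hasDerivAt ht (fun s hs => hode s hs.1)
      (fun s hs => hmem s hs.1)
  refine ⟨fun t ht => ⟨hmem t ht, exp_eq_of_potential_eq hx₁ (hmem t ht) (hlaw t ht)⟩, ?_⟩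
  have hlinear : Tendsto (fun t => potential x₁ + (π₂₂ - π₁₂) * t) atTop atTop :=
    tendsto_atTop_add_const_left _ _ (tendsto_id.const_mul_atTop (sub_pos.2 hπ))
  exact tendsto_nhds_one_of_tendsto_potential ((eventually_ge_atTop 0).mono hmem)
    (hlinear.congr' ((eventually_ge_atTop 0).mono fun t ht => (hlaw t ht).symm))

/-- The case `γ = 1`: the scalar ODE `A₁' = (π₂₂ − π₁₂)A₁(1−A₁)²` stays in
`(0,1)`, satisfies the implicit exponential formula, and `A₁(t) → 1`. -/
theorem gamma_one_case (π₁₂ π₂₂ x₁ : ℝ)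
    (hπ₁₂ : 0 < π₁₂) (hπ : π₁₂ < π₂₂) (hx₁ : x₁ ∈ Set.Ioo (0:ℝ) 1)
    (A₁ : ℝ → ℝ) (hA0 : A₁ 0 = x₁)
    (hode : ∀ t, 0 ≤ t →
      HasDerivAt A₁ ((π₂₂ - π₁₂) * A₁ t * (1 - A₁ t) ^ 2) t) :
    (∀ t, 0 ≤ t → A₁ t ∈ Set.Ioo (0:ℝ) 1 ∧
      (1 - x₁) * A₁ t / (x₁ * (1 - A₁ t))
        * Real.exp (1 / (1 - A₁ t) - 1 / (1 - x₁))
        = Real.exp ((π₂₂ - π₁₂) * t)) ∧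
    Tendsto A₁ atTop (nhds 1) :=
  gamma_one_case_general π₁₂ π₂₂ x₁ hπ hx₁ A₁ hA0 hode
end

section
/- Let θ_1 > 0 and x_1 ∈ (0,1). Then ∫_0^∞ (1 + y/(x_1 θ_1))^{−θ_1 − 1} e^{−y/(1−x_1)} dy < x_1(1 − x_1). -/
open Real MeasureTheory

open Set Filter Topology

/-!
Since `log (1 + t) < t`, we have `e^{-y/(1-x₁)} < (1 + y/(x₁θ₁))^{-s}` with `s = x₁θ₁/(1-x₁)`,
so the integrand is strictly dominated by `(1 + y/(x₁θ₁))^{-(θ₁+1+s)}`, an explicit antiderivative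
of which shows that its integral over `(0, ∞)` is `x₁θ₁/(θ₁+s) = x₁(1-x₁)`.
-/

theorem exp_neg_mul_lt_one_add_rpow_neg {s t : ℝ} (hs : 0 < s) (ht : 0 < t) :
    exp (-(s * t)) < (1 + t) ^ (-s) := by
  have hlog : log (1 + t) < t := by
    linarith [log_lt_sub_one_of_pos (by positivity : 0 < 1 + t) (by linarith : 1 + t ≠ 1)]
  rw [rpow_def_of_pos (by positivity), exp_lt_exp]
  nlinarith

theorem setIntegral_lt_setIntegral_of_forall_lt {α : Type*} [MeasurableSpace α] {μ : Measure α}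
    {s : Set α} {f g : α → ℝ} (hs : MeasurableSet s) (hμs : μ s ≠ 0)
    (hf : IntegrableOn f s μ) (hg : IntegrableOn g s μ) (hlt : ∀ x ∈ s, f x < g x) :
    ∫ x in s, f x ∂μ < ∫ x in s, g x ∂μ := by
  rw [← sub_pos, ← integral_sub hg hf, integral_pos_iff_support_of_nonneg_ae]
  · have hsupp : s ⊆ Function.support (fun x => g x - f x) := fun x hx =>
      sub_ne_zero.2 (hlt x hx).ne'
    rwa [Measure.restrict_apply' hs, inter_eq_right.2 hsupp, pos_iff_ne_zero]
  · filter_upwards [ae_restrict_mem hs] with x hx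
    exact sub_nonneg.2 (hlt x hx).le
  · exact hg.sub hf

section OneAddDivRpow

variable {c p : ℝ}

theorem hasDerivAt_one_add_div_rpow (hc : c ≠ 0) (hp : p ≠ 1) {y : ℝ} (hy : 0 < 1 + y / c) :
    HasDerivAt (fun y => -(c / (p - 1)) * (1 + y / c) ^ (-(p - 1))) ((1 + y / c) ^ (-p)) y := by
  have h := ((((hasDerivAt_id y).div_const c).const_add 1).rpow_const (p := -(p - 1))
    (Or.inl hy.ne')).const_mul (-(c / (p - 1)))
  refine h.congr_deriv ?_
  rw [show -(p - 1) - 1 = -p by ring, id]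
  field_simp [sub_ne_zero.2 hp]

theorem tendsto_one_add_div_rpow_atTop (hc : 0 < c) (hp : 1 < p) :
    Tendsto (fun y => -(c / (p - 1)) * (1 + y / c) ^ (-(p - 1))) atTop (𝓝 0) := by
  have h : Tendsto (fun y : ℝ => 1 + y / c) atTop atTop :=
    tendsto_atTop_add_const_left _ _ (tendsto_id.atTop_div_const hc)
  simpa only [mul_zero, Function.comp_apply] using
    ((tendsto_rpow_neg_atTop (by linarith : 0 < p - 1)).comp h).const_mul (-(c / (p - 1)))

theorem integrableOn_Ioi_one_add_div_rpow_neg (hc : 0 < c) (hp : 1 < p) :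
    IntegrableOn (fun y => (1 + y / c) ^ (-p)) (Ioi 0) :=
  integrableOn_Ioi_deriv_of_nonneg'
    (fun y (hy : 0 ≤ y) => hasDerivAt_one_add_div_rpow hc.ne' hp.ne' (by positivity))
    (fun y (hy : 0 < y) => by positivity) (tendsto_one_add_div_rpow_atTop hc hp)

theorem integral_Ioi_one_add_div_rpow_neg (hc : 0 < c) (hp : 1 < p) :
    ∫ y in Ioi 0, (1 + y / c) ^ (-p) = c / (p - 1) := by
  rw [integral_Ioi_of_hasDerivAt_of_nonneg'
    (fun y (hy : 0 ≤ y) => hasDerivAt_one_add_div_rpow hc.ne' hp.ne' (by positivity))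
    (fun y (hy : 0 < y) => by positivity) (tendsto_one_add_div_rpow_atTop hc hp)]
  simp

end OneAddDivRpow

/-- Homogamy inequality in the case `π₁₁ = π₁₂ < π₂₂`:
`∫₀^∞ (1 + y/(x₁θ₁))^{−θ₁−1} e^{−y/(1−x₁)} dy < x₁(1 − x₁)`. -/
theorem homogamy_integral_lt (θ₁ x₁ : ℝ) (hθ₁ : 0 < θ₁)
    (hx₁ : x₁ ∈ Set.Ioo (0:ℝ) 1) :
    ∫ y in Set.Ioi (0:ℝ),
        (1 + y / (x₁ * θ₁)) ^ (-θ₁ - 1) * Real.exp (-y / (1 - x₁))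
      < x₁ * (1 - x₁) := by
  obtain ⟨hx0, hx1⟩ := hx₁
  set c := x₁ * θ₁
  set s := c / (1 - x₁)
  have hc : 0 < c := by positivity
  have hs : 0 < s := div_pos hc (by linarith)
  have hlt : ∀ y ∈ Ioi (0:ℝ), (1 + y / c) ^ (-θ₁ - 1) * exp (-y / (1 - x₁))
      < (1 + y / c) ^ (-(θ₁ + 1 + s)) := by
    intro y (hy : 0 < y)
    have hexp := exp_neg_mul_lt_one_add_rpow_neg hs (div_pos hy hc)
    rw [show s * (y / c) = y / (1 - x₁) by simp only [s]; field_simp] at hexp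
    rw [show -(θ₁ + 1 + s) = (-θ₁ - 1) + -s by ring, rpow_add (by positivity), neg_div]
    gcongr
  have hg := integrableOn_Ioi_one_add_div_rpow_neg hc (by linarith : 1 < θ₁ + 1 + s)
  have hf : IntegrableOn (fun y => (1 + y / c) ^ (-θ₁ - 1) * exp (-y / (1 - x₁))) (Ioi 0) := by
    refine hg.mono' (by fun_prop) ?_
    filter_upwards [ae_restrict_mem measurableSet_Ioi] with y (hy : 0 < y)
    rw [norm_of_nonneg (by positivity)]
    exact (hlt y hy).le
  calc _ < ∫ y in Ioi 0, (1 + y / c) ^ (-(θ₁ + 1 + s)) :=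
        setIntegral_lt_setIntegral_of_forall_lt measurableSet_Ioi (by simp) hf hg hlt
    _ = c / (θ₁ + 1 + s - 1) := integral_Ioi_one_add_div_rpow_neg hc (by linarith)
    _ = x₁ * (1 - x₁) := by
      have h1x : 1 - x₁ ≠ 0 := by linarith
      rw [show θ₁ + 1 + s - 1 = θ₁ / (1 - x₁) by simp only [s, c]; field_simp; ring]
      field_simp [hθ₁.ne']
      simp only [c]
      ring
end

section
/- Let 0 < x_1 < 1, γ < 0, θ_2 > 0, θ_1 < −1 with θ_1 + θ_2 < 0 and (1−γ)θ_2 = γθ_1. Then θ_1 γ ∫_0^{−x_1/γ} (1 + γy/x_1)^{−(θ_1+1)} (1 + (1−γ)y/(1−x_1))^{−(θ_2+1)} dy < x_1(1 − x_1). -/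
open Real MeasureTheory

/-!
Write `u = 1 + γ y / x₁` and `v = 1 + (1 - γ) y / (1 - x₁)`, so that `x₁ u + (1 - x₁) v = 1 + y`.
Thanks to `(1 - γ) θ₂ = γ θ₁`, the derivative of `u ^ (-θ₁) * v ^ (-θ₂)` is
`-γ θ₁ / (x₁ (1 - x₁)) * (1 + y) * u ^ (-(θ₁ + 1)) * v ^ (-(θ₂ + 1))`. As `u` vanishes at
`-x₁ / γ`, integrating over `(0, -x₁ / γ)` gives `γ θ₁ ∫ (1 + y) u ^ (-(θ₁ + 1)) v ^ (-(θ₂ + 1)) =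
x₁ (1 - x₁)`, and dropping the positive part `γ θ₁ ∫ y u ^ (-(θ₁ + 1)) v ^ (-(θ₂ + 1))` leaves
the strict inequality.
-/

theorem hasDerivAt_one_add_mul_rpow_mul_one_add_mul_rpow {a b p q y : ℝ}
    (hu : 0 ≤ 1 + a * y) (hp : 1 ≤ p) (hv : 0 < 1 + b * y) :
    HasDerivAt (fun y => (1 + a * y) ^ p * (1 + b * y) ^ q)
      ((1 + a * y) ^ (p - 1) * (1 + b * y) ^ (q - 1) *
        (p * a * (1 + b * y) + q * b * (1 + a * y))) y := by
  have hu' : HasDerivAt (fun y => 1 + a * y) a y := by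
    simpa using ((hasDerivAt_id y).const_mul a).const_add 1
  have hv' : HasDerivAt (fun y => 1 + b * y) b y := by
    simpa using ((hasDerivAt_id y).const_mul b).const_add 1
  have hup : (1 + a * y) ^ p = (1 + a * y) ^ (p - 1) * (1 + a * y) := by
    rw [← rpow_add_one' hu (by linarith), sub_add_cancel]
  have hvq : (1 + b * y) ^ q = (1 + b * y) ^ (q - 1) * (1 + b * y) := by
    rw [← rpow_add_one hv.ne', sub_add_cancel]
  refine ((hu'.rpow_const (Or.inr hp)).mul (hv'.rpow_const (Or.inl hv.ne'))).congr_deriv ?_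
  rw [hup, hvq]
  ring

namespace Homogamy

noncomputable def kernel (x₁ γ θ₁ θ₂ y : ℝ) : ℝ :=
  (1 + γ * y / x₁) ^ (-(θ₁ + 1)) * (1 + (1 - γ) * y / (1 - x₁)) ^ (-(θ₂ + 1))

noncomputable def potential (x₁ γ θ₁ θ₂ y : ℝ) : ℝ :=
  (1 + γ * y / x₁) ^ (-θ₁) * (1 + (1 - γ) * y / (1 - x₁)) ^ (-θ₂)

variable {x₁ γ θ₁ θ₂ y : ℝ}

theorem one_add_mul_div_pos_iff (hx₁ : 0 < x₁) (hγ : γ < 0) :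
    0 < 1 + γ * y / x₁ ↔ y < -x₁ / γ := by
  rw [lt_div_iff_of_neg hγ, show 1 + γ * y / x₁ = (x₁ + γ * y) / x₁ by field_simp,
    div_pos_iff_of_pos_right hx₁]
  constructor <;> intro <;> linarith

theorem one_add_mul_div_nonneg_iff (hx₁ : 0 < x₁) (hγ : γ < 0) :
    0 ≤ 1 + γ * y / x₁ ↔ y ≤ -x₁ / γ := by
  rw [le_div_iff_of_neg hγ, show 1 + γ * y / x₁ = (x₁ + γ * y) / x₁ by field_simp,
    le_div_iff₀ hx₁]
  constructor <;> intro <;> linarith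

theorem one_add_mul_div_one_sub_pos (hx₁ : x₁ < 1) (hγ : γ ≤ 1) (hy : 0 ≤ y) :
    0 < 1 + (1 - γ) * y / (1 - x₁) := by
  have : 0 ≤ (1 - γ) * y / (1 - x₁) := div_nonneg (mul_nonneg (by linarith) hy) (by linarith)
  linarith

theorem potential_zero : potential x₁ γ θ₁ θ₂ 0 = 1 := by
  simp [potential]

theorem potential_neg_div (hx₁ : x₁ ≠ 0) (hγ : γ ≠ 0) (hθ₁ : θ₁ ≠ 0) :
    potential x₁ γ θ₁ θ₂ (-x₁ / γ) = 0 := by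
  have : 1 + γ * (-x₁ / γ) / x₁ = 0 := by field_simp; ring
  rw [potential, this, zero_rpow (neg_ne_zero.mpr hθ₁), zero_mul]

theorem hasDerivAt_potential (hx₁ : x₁ ≠ 0) (hx₁' : x₁ ≠ 1) (hθ₁ : θ₁ ≤ -1)
    (hrel : (1 - γ) * θ₂ = γ * θ₁) (hu : 0 ≤ 1 + γ * y / x₁)
    (hv : 0 < 1 + (1 - γ) * y / (1 - x₁)) :
    HasDerivAt (potential x₁ γ θ₁ θ₂)
      (-(γ * θ₁ / (x₁ * (1 - x₁))) * ((1 + y) * kernel x₁ γ θ₁ θ₂ y)) y := by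
  have h := hasDerivAt_one_add_mul_rpow_mul_one_add_mul_rpow (a := γ / x₁)
    (b := (1 - γ) / (1 - x₁)) (p := -θ₁) (q := -θ₂) (y := y)
    (by rwa [div_mul_eq_mul_div]) (by linarith) (by rwa [div_mul_eq_mul_div])
  simp only [div_mul_eq_mul_div] at h
  refine h.congr_deriv ?_
  have h1x : 1 - x₁ ≠ 0 := sub_ne_zero.mpr (Ne.symm hx₁')
  rw [kernel, show -(θ₁ + 1) = -θ₁ - 1 by ring, show -(θ₂ + 1) = -θ₂ - 1 by ring]
  generalize (1 + γ * y / x₁) ^ (-θ₁ - 1) = A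
  generalize (1 + (1 - γ) * y / (1 - x₁)) ^ (-θ₂ - 1) = B
  field_simp
  linear_combination -(x₁ + γ * y) * A * B * hrel

theorem continuousOn_kernel (hx₁ : x₁ < 1) (hγ : γ ≤ 1) (hθ₁ : θ₁ ≤ -1) :
    ContinuousOn (kernel x₁ γ θ₁ θ₂) (Set.Ici 0) := by
  intro y hy
  refine ContinuousAt.continuousWithinAt (ContinuousAt.mul ?_ ?_)
  · exact (by fun_prop : ContinuousAt (fun y => 1 + γ * y / x₁) y).rpow_const
      (Or.inr (by linarith))
  · exact (by fun_prop : ContinuousAt (fun y => 1 + (1 - γ) * y / (1 - x₁)) y).rpow_const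
      (Or.inl (one_add_mul_div_one_sub_pos hx₁ hγ hy).ne')

theorem kernel_pos (hx₁ : x₁ ∈ Set.Ioo 0 1) (hγ : γ < 0) (hy : y ∈ Set.Ico 0 (-x₁ / γ)) :
    0 < kernel x₁ γ θ₁ θ₂ y :=
  mul_pos (rpow_pos_of_pos ((one_add_mul_div_pos_iff hx₁.1 hγ).mpr hy.2) _)
    (rpow_pos_of_pos (one_add_mul_div_one_sub_pos hx₁.2 (by linarith) hy.1) _)

theorem integral_one_add_mul_kernel (hx₁ : x₁ ∈ Set.Ioo 0 1) (hγ : γ < 0) (hθ₁ : θ₁ ≤ -1)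
    (hrel : (1 - γ) * θ₂ = γ * θ₁) :
    γ * θ₁ * ∫ y in (0 : ℝ)..(-x₁ / γ), (1 + y) * kernel x₁ γ θ₁ θ₂ y = x₁ * (1 - x₁) := by
  obtain ⟨hx0, hx1⟩ := hx₁
  have hs : 0 ≤ -x₁ / γ := div_nonneg_of_nonpos (by linarith) hγ.le
  have hcont : ContinuousOn (fun y => (1 + y) * kernel x₁ γ θ₁ θ₂ y) (Set.uIcc 0 (-x₁ / γ)) := by
    rw [Set.uIcc_of_le hs]
    exact (continuousOn_const.add continuousOn_id).mul
      ((continuousOn_kernel hx1 (by linarith) hθ₁).mono Set.Icc_subset_Ici_self)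
  have hftc := intervalIntegral.integral_eq_sub_of_hasDerivAt
    (fun y hy => hasDerivAt_potential (θ₂ := θ₂) hx0.ne' hx1.ne hθ₁ hrel ?_ ?_)
    (hcont.intervalIntegrable.const_mul (-(γ * θ₁ / (x₁ * (1 - x₁)))))
  · rw [intervalIntegral.integral_const_mul, potential_zero,
      potential_neg_div hx0.ne' hγ.ne (by linarith)] at hftc
    have hx : x₁ * (1 - x₁) ≠ 0 := by nlinarith
    calc γ * θ₁ * ∫ y in (0 : ℝ)..(-x₁ / γ), (1 + y) * kernel x₁ γ θ₁ θ₂ y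
        = -(x₁ * (1 - x₁)) * (-(γ * θ₁ / (x₁ * (1 - x₁))) *
            ∫ y in (0 : ℝ)..(-x₁ / γ), (1 + y) * kernel x₁ γ θ₁ θ₂ y) := by
          field_simp
      _ = x₁ * (1 - x₁) := by rw [hftc]; ring
  all_goals rw [Set.uIcc_of_le hs] at hy
  · exact (one_add_mul_div_nonneg_iff hx0 hγ).mpr hy.2
  · exact one_add_mul_div_one_sub_pos hx1 (by linarith) hy.1

theorem mul_integral_kernel_lt (hx₁ : x₁ ∈ Set.Ioo 0 1) (hγ : γ < 0) (hθ₁ : θ₁ ≤ -1)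
    (hrel : (1 - γ) * θ₂ = γ * θ₁) :
    θ₁ * γ * ∫ y in (0 : ℝ)..(-x₁ / γ), kernel x₁ γ θ₁ θ₂ y < x₁ * (1 - x₁) := by
  have hs : 0 < -x₁ / γ := div_pos_of_neg_of_neg (by linarith [hx₁.1]) hγ
  have hcont : ContinuousOn (kernel x₁ γ θ₁ θ₂) (Set.uIcc 0 (-x₁ / γ)) := by
    rw [Set.uIcc_of_le hs.le]
    exact (continuousOn_kernel hx₁.2 (by linarith) hθ₁).mono Set.Icc_subset_Ici_self
  have hint := hcont.intervalIntegrable (μ := volume)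
  have hint' : IntervalIntegrable (fun y => y * kernel x₁ γ θ₁ θ₂ y) volume 0 (-x₁ / γ) :=
    (continuousOn_id.mul hcont).intervalIntegrable
  have hpos : 0 < ∫ y in (0 : ℝ)..(-x₁ / γ), y * kernel x₁ γ θ₁ θ₂ y :=
    intervalIntegral.intervalIntegral_pos_of_pos_on hint'
      (fun y hy => mul_pos hy.1 (kernel_pos hx₁ hγ ⟨hy.1.le, hy.2⟩)) hs
  have hidentity := integral_one_add_mul_kernel hx₁ hγ hθ₁ hrel
  simp only [add_mul, one_mul] at hidentity
  rw [intervalIntegral.integral_add hint hint'] at hidentity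
  nlinarith [mul_pos (mul_pos_of_neg_of_neg hγ (by linarith : θ₁ < 0)) hpos]

end Homogamy

theorem homogamy_integral_neg_gamma_general (x₁ γ θ₁ θ₂ : ℝ)
    (hx₁ : x₁ ∈ Set.Ioo (0:ℝ) 1) (hγ : γ < 0)
    (hθ₁ : θ₁ < -1)
    (hrel : (1 - γ) * θ₂ = γ * θ₁) :
    θ₁ * γ * ∫ y in Set.Ioo (0:ℝ) (-x₁ / γ),
        (1 + γ * y / x₁) ^ (-(θ₁ + 1))
          * (1 + (1 - γ) * y / (1 - x₁)) ^ (-(θ₂ + 1))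
      < x₁ * (1 - x₁) := by
  have hs : 0 ≤ -x₁ / γ := div_nonneg_of_nonpos (by linarith [hx₁.1]) hγ.le
  rw [← integral_Ioc_eq_integral_Ioo, ← intervalIntegral.integral_of_le hs]
  exact Homogamy.mul_integral_kernel_lt hx₁ hγ hθ₁.le hrel

/-- Homogamy bound in the case `π₁₁ > π₁₂ > π₂₂` (`γ < 0`). -/
theorem homogamy_integral_neg_gamma (x₁ γ θ₁ θ₂ : ℝ)
    (hx₁ : x₁ ∈ Set.Ioo (0:ℝ) 1) (hγ : γ < 0)
    (hθ₂ : 0 < θ₂) (hθ₁ : θ₁ < -1) (hsum : θ₁ + θ₂ < 0)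
    (hrel : (1 - γ) * θ₂ = γ * θ₁) :
    θ₁ * γ * ∫ y in Set.Ioo (0:ℝ) (-x₁ / γ),
        (1 + γ * y / x₁) ^ (-(θ₁ + 1))
          * (1 + (1 - γ) * y / (1 - x₁)) ^ (-(θ₂ + 1))
      < x₁ * (1 - x₁) :=
  homogamy_integral_neg_gamma_general x₁ γ θ₁ θ₂ hx₁ hγ hθ₁ hrel
end
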